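/- arXiv:math/0104159 — 4 statements merged into one kernel-verified Lean document; each statement's English description precedes it below -/
import Mathlib

section
/- Let S be a (possibly noncommutative) ring in which 2 is invertible (with inverse one-half, which is central since 2 is). For elements u₁, v₁, u₂, v₂ of S define the operator P(u,v) : S → S by P(u,v)(X) = (1/2)·(X - u·X·v). Then for every X ∈ S, 2·P(u₁,v₁)(P(u₂,v₂)(X)) = P(u₁,v₁)(X) + P(u₂,v₂)(X) - P(u₁·u₂, v₂·v₁)(X). -/
/-- The generalized projection operator `P(u,v)(X) = (1/2)·(X - u·X·v)`. -/
def genProj {S : Type*} [Ring S] [Invertible (2 : S)] (u v X : S) : S :=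
  ⅟(2 : S) * (X - u * X * v)

/-- **Fundamental Theorem of Projection Operators**, general form:
`2·P(u₁,v₁)(P(u₂,v₂)(X)) = P(u₁,v₁)(X) + P(u₂,v₂)(X) - P(u₁·u₂, v₂·v₁)(X)`. -/
theorem two_mul_genProj_genProj {S : Type*} [Ring S] [Invertible (2 : S)]
    (u₁ v₁ u₂ v₂ : S) (X : S) :
    2 * genProj u₁ v₁ (genProj u₂ v₂ X) =
      genProj u₁ v₁ X + genProj u₂ v₂ X - genProj (u₁ * u₂) (v₂ * v₁) X := by
  have hc : ∀ a : S, ⅟(2:S) * a = a * ⅟(2:S) := fun a =>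
    Commute.invOf_left ((two_mul a).trans (mul_two a).symm)
  simp only [genProj]
  rw [← mul_assoc, mul_invOf_self, one_mul]
  rw [show u₁ * (⅟(2:S) * (X - u₂ * X * v₂)) * v₁
      = ⅟(2:S) * (u₁ * (X - u₂ * X * v₂) * v₁) by
    rw [← mul_assoc, ← hc u₁, mul_assoc, mul_assoc, ← mul_assoc u₁]]
  rw [← mul_sub, ← mul_add, ← mul_sub]
  congr 1
  noncomm_ring
end

section
/- Let A ∈ Cl(Q) be an invertible versor, i.e. an invertible element of the multiplicative submonoid of Cl(Q) generated by the image of ι : M → Cl(Q). Then for every vector x ∈ M, the element α(A)·ι(x)·A⁻¹ lies in the image of ι, i.e. there exists y ∈ M with α(A)·ι(x)·A⁻¹ = ι(y). -/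
open CliffordAlgebra

set_option maxHeartbeats 1000000

namespace VersorProofAux


variable {R M : Type*} [CommRing R] [AddCommGroup M] [Module R M]

section quot

variable (Q : QuadraticForm R M) (I : Ideal R)

theorem polar_mem_right (x : M) {y : M} (hy : y ∈ (I • ⊤ : Submodule R M)) :
    QuadraticMap.polar Q x y ∈ I := by
  refine Submodule.smul_induction_on hy ?_ ?_
  · intro c hc n _
    rw [QuadraticMap.polar_smul_right, smul_eq_mul]
    exact I.mul_mem_right _ hc
  · intro a b ha hb
    rw [QuadraticMap.polar_add_right]
    exact I.add_mem ha hb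

theorem polar_mem_left {x : M} (hx : x ∈ (I • ⊤ : Submodule R M)) (y : M) :
    QuadraticMap.polar Q x y ∈ I := by
  rw [QuadraticMap.polar_comm]
  exact polar_mem_right Q I y hx

theorem apply_mem {y : M} (hy : y ∈ (I • ⊤ : Submodule R M)) : Q y ∈ I := by
  suffices h : y ∈ (I • ⊤ : Submodule R M) ∧ Q y ∈ I from h.2
  refine Submodule.smul_induction_on hy ?_ ?_
  · intro c hc n _
    refine ⟨Submodule.smul_mem_smul hc trivial, ?_⟩
    rw [QuadraticMap.map_smul, smul_eq_mul]
    exact I.mul_mem_right _ (I.mul_mem_right _ hc)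
  · rintro a b ⟨ha, hQa⟩ ⟨hb, hQb⟩
    refine ⟨Submodule.add_mem _ ha hb, ?_⟩
    rw [QuadraticMap.map_add (Q : M → R) a b]
    exact I.add_mem (I.add_mem hQa hQb) (polar_mem_left Q I ha b)

theorem sub_apply_mem {a b : M} (hab : a - b ∈ (I • ⊤ : Submodule R M)) :
    Q a - Q b ∈ I := by
  have key : Q a - Q b = Q (a - b) + QuadraticMap.polar Q b (a - b) := by
    have h2 : b + (a - b) = a := by abel
    have h1 := QuadraticMap.map_add (Q : M → R) b (a - b)
    rw [h2] at h1
    rw [h1]; ring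
  rw [key]
  exact I.add_mem (apply_mem Q I hab) (polar_mem_right Q I b hab)

/-- The reduction of a quadratic form modulo an ideal. -/
noncomputable def quotQF : QuadraticForm (R ⧸ I) (M ⧸ (I • ⊤ : Submodule R M)) where
  toFun x :=
    Quotient.liftOn x (fun m => Ideal.Quotient.mk I (Q m)) fun a b hab => by
      have h' : a - b ∈ (I • ⊤ : Submodule R M) := (Submodule.quotientRel_def _).mp hab
      rw [Ideal.Quotient.mk_eq_mk_iff_sub_mem]
      exact sub_apply_mem Q I h'
  toFun_smul a x := by
    obtain ⟨c, rfl⟩ := Ideal.Quotient.mk_surjective a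
    obtain ⟨m, rfl⟩ := Submodule.Quotient.mk_surjective _ x
    show Quotient.liftOn (Ideal.Quotient.mk I c • Submodule.Quotient.mk m) _ _ = _
    rw [Module.Quotient.mk_smul_mk]
    show Ideal.Quotient.mk I (Q (c • m)) =
      (Ideal.Quotient.mk I c * Ideal.Quotient.mk I c) • Ideal.Quotient.mk I (Q m)
    rw [QuadraticMap.map_smul, smul_eq_mul, smul_eq_mul, map_mul, map_mul]
  exists_companion' := by
    refine ⟨LinearMap.mk₂ (R ⧸ I)
      (fun x y => Quotient.liftOn₂ x y
        (fun a b => Ideal.Quotient.mk I (QuadraticMap.polar Q a b))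
        fun a₁ b₁ a₂ b₂ ha hb => by
          have ha' : a₁ - a₂ ∈ (I • ⊤ : Submodule R M) := (Submodule.quotientRel_def _).mp ha
          have hb' : b₁ - b₂ ∈ (I • ⊤ : Submodule R M) := (Submodule.quotientRel_def _).mp hb
          rw [Ideal.Quotient.mk_eq_mk_iff_sub_mem]
          have key : QuadraticMap.polar Q a₁ b₁ - QuadraticMap.polar Q a₂ b₂ =
              QuadraticMap.polar Q (a₁ - a₂) b₁ + QuadraticMap.polar Q a₂ (b₁ - b₂) := by
            rw [QuadraticMap.polar_sub_left, QuadraticMap.polar_sub_right]; ring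
          rw [key]
          exact I.add_mem (polar_mem_left Q I ha' b₁) (polar_mem_right Q I a₂ hb'))
      ?_ ?_ ?_ ?_, ?_⟩
    · intro x y z
      obtain ⟨a, rfl⟩ := Submodule.Quotient.mk_surjective _ x
      obtain ⟨b, rfl⟩ := Submodule.Quotient.mk_surjective _ y
      obtain ⟨c, rfl⟩ := Submodule.Quotient.mk_surjective _ z
      show Quotient.liftOn₂ (Submodule.Quotient.mk a + Submodule.Quotient.mk b) _ _ _ = _
      rw [← Submodule.Quotient.mk_add]
      show Ideal.Quotient.mk I (QuadraticMap.polar Q (a + b) c) = _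
      rw [QuadraticMap.polar_add_left, map_add]
      rfl
    · intro c x y
      obtain ⟨s, rfl⟩ := Ideal.Quotient.mk_surjective c
      obtain ⟨a, rfl⟩ := Submodule.Quotient.mk_surjective _ x
      obtain ⟨b, rfl⟩ := Submodule.Quotient.mk_surjective _ y
      show Quotient.liftOn₂ (Ideal.Quotient.mk I s • Submodule.Quotient.mk a) _ _ _ = _
      rw [Module.Quotient.mk_smul_mk]
      show Ideal.Quotient.mk I (QuadraticMap.polar Q (s • a) b) = _
      rw [QuadraticMap.polar_smul_left, smul_eq_mul, map_mul]
      rfl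
    · intro x y z
      obtain ⟨a, rfl⟩ := Submodule.Quotient.mk_surjective _ x
      obtain ⟨b, rfl⟩ := Submodule.Quotient.mk_surjective _ y
      obtain ⟨c, rfl⟩ := Submodule.Quotient.mk_surjective _ z
      show Quotient.liftOn₂ _ (Submodule.Quotient.mk b + Submodule.Quotient.mk c) _ _ = _
      rw [← Submodule.Quotient.mk_add]
      show Ideal.Quotient.mk I (QuadraticMap.polar Q a (b + c)) = _
      rw [QuadraticMap.polar_add_right, map_add]
      rfl
    · intro c x y
      obtain ⟨s, rfl⟩ := Ideal.Quotient.mk_surjective c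
      obtain ⟨a, rfl⟩ := Submodule.Quotient.mk_surjective _ x
      obtain ⟨b, rfl⟩ := Submodule.Quotient.mk_surjective _ y
      show Quotient.liftOn₂ _ (Ideal.Quotient.mk I s • Submodule.Quotient.mk b) _ _ = _
      rw [Module.Quotient.mk_smul_mk]
      show Ideal.Quotient.mk I (QuadraticMap.polar Q a (s • b)) = _
      rw [QuadraticMap.polar_smul_right, smul_eq_mul, map_mul]
      rfl
    · intro x y
      obtain ⟨a, rfl⟩ := Submodule.Quotient.mk_surjective _ x
      obtain ⟨b, rfl⟩ := Submodule.Quotient.mk_surjective _ y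
      show Quotient.liftOn (Submodule.Quotient.mk a + Submodule.Quotient.mk b) _ _ = _
      rw [← Submodule.Quotient.mk_add]
      show Ideal.Quotient.mk I (Q (a + b)) = _
      rw [QuadraticMap.map_add (Q : M → R) a b, map_add, map_add]
      rfl

@[simp]
theorem quotQF_mk (m : M) :
    quotQF Q I (Submodule.Quotient.mk m) = Ideal.Quotient.mk I (Q m) := rfl

end quot

theorem isUnit_of_isUnit_algebraMap (Q : QuadraticForm R M) (r : R)
    (h : IsUnit (algebraMap R (CliffordAlgebra Q) r)) : IsUnit r := by
  by_contra hr
  obtain ⟨J, hmax, hle⟩ := Ideal.exists_le_maximal (Ideal.span {r})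
    fun ht => hr (Ideal.span_singleton_eq_top.mp ht)
  haveI := hmax
  have hrm : r ∈ J := hle (Ideal.subset_span rfl)
  letI : Field (R ⧸ J) := Ideal.Quotient.field J
  set Q' := quotQF Q J with hQ'
  obtain ⟨B, hB⟩ := LinearMap.BilinMap.toQuadraticMap_surjective (R := R ⧸ J)
      (M := M ⧸ (J • ⊤ : Submodule R M)) (-Q')
  have hB' : B.toQuadraticMap = (0 : QuadraticForm (R ⧸ J) (M ⧸ (J • ⊤ : Submodule R M))) - Q' := by
    rw [hB, zero_sub]
  haveI hnt : Nontrivial (CliffordAlgebra Q') := by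
    haveI : Nontrivial
        (CliffordAlgebra (0 : QuadraticForm (R ⧸ J) (M ⧸ (J • ⊤ : Submodule R M)))) :=
      inferInstanceAs (Nontrivial (ExteriorAlgebra (R ⧸ J) (M ⧸ (J • ⊤ : Submodule R M))))
    exact (CliffordAlgebra.changeFormEquiv hB').symm.injective.nontrivial
  letI : Algebra R (CliffordAlgebra Q') :=
    Algebra.compHom (CliffordAlgebra Q') (Ideal.Quotient.mk J)
  have halg : algebraMap R (CliffordAlgebra Q') =
      (algebraMap (R ⧸ J) (CliffordAlgebra Q')).comp (Ideal.Quotient.mk J) := rfl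
  have hsmul : ∀ (c : R) (t : CliffordAlgebra Q'), c • t = Ideal.Quotient.mk J c • t :=
    fun c t => rfl
  have cond : ∀ mm : M, ι Q' (Submodule.Quotient.mk mm) * ι Q' (Submodule.Quotient.mk mm)
      = algebraMap R (CliffordAlgebra Q') (Q mm) := by
    intro mm
    rw [ι_sq_scalar, halg]
    rfl
  let φ : M →ₗ[R] CliffordAlgebra Q' :=
    { toFun := fun mm => ι Q' (Submodule.Quotient.mk mm)
      map_add' := fun a b => by
        show ι Q' (Submodule.Quotient.mk (a + b)) = _
        rw [Submodule.Quotient.mk_add, map_add]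
      map_smul' := fun c a => by
        show ι Q' (Submodule.Quotient.mk (c • a)) = c • ι Q' (Submodule.Quotient.mk a)
        rw [hsmul, ← map_smul, ← Module.Quotient.mk_smul_mk] }
  let g : CliffordAlgebra Q →ₐ[R] CliffordAlgebra Q' := CliffordAlgebra.lift Q ⟨φ, cond⟩
  have h2 := h.map g
  rw [g.commutes, halg, RingHom.comp_apply, Ideal.Quotient.eq_zero_iff_mem.mpr hrm,
    map_zero] at h2
  exact zero_ne_one (isUnit_zero_iff.mp h2)

variable {Q : QuadraticForm R M}

theorem versor_mul_reverse_scalar {A : CliffordAlgebra Q}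
    (hA : A ∈ Submonoid.closure (Set.range (ι Q))) :
    ∃ r : R, A * reverse A = algebraMap R _ r ∧ reverse A * A = algebraMap R _ r := by
  induction hA using Submonoid.closure_induction with
  | mem a ha =>
    obtain ⟨m, rfl⟩ := ha
    exact ⟨Q m, by rw [reverse_ι, ι_sq_scalar], by rw [reverse_ι, ι_sq_scalar]⟩
  | one => exact ⟨1, by simp, by simp⟩
  | mul B C hB hC ihB ihC =>
    obtain ⟨r, hr1, hr2⟩ := ihB
    obtain ⟨s, hs1, hs2⟩ := ihC
    refine ⟨s * r, ?_, ?_⟩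
    · rw [reverse.map_mul]
      calc B * C * (reverse C * reverse B)
          = B * (C * reverse C * reverse B) := by simp only [mul_assoc]
        _ = B * (algebraMap R _ s * reverse B) := by rw [hs1]
        _ = B * (reverse B * algebraMap R _ s) := by rw [Algebra.commutes]
        _ = B * reverse B * algebraMap R _ s := (mul_assoc _ _ _).symm
        _ = algebraMap R _ r * algebraMap R _ s := by rw [hr1]
        _ = algebraMap R _ (s * r) := by rw [← map_mul, mul_comm]
    · rw [reverse.map_mul]
      calc reverse C * reverse B * (B * C)
          = reverse C * (reverse B * B * C) := by simp only [mul_assoc]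
        _ = reverse C * (algebraMap R _ r * C) := by rw [hr2]
        _ = reverse C * (C * algebraMap R _ r) := by rw [Algebra.commutes]
        _ = reverse C * C * algebraMap R _ r := (mul_assoc _ _ _).symm
        _ = algebraMap R _ s * algebraMap R _ r := by rw [hs2]
        _ = algebraMap R _ (s * r) := by rw [← map_mul]

theorem involute_mul_ι_mul_reverse_mem {A : CliffordAlgebra Q}
    (hA : A ∈ Submonoid.closure (Set.range (ι Q))) (x : M) :
    ∃ y : M, involute A * ι Q x * reverse A = ι Q y := by
  induction hA using Submonoid.closure_induction generalizing x with
  | mem a ha =>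
    obtain ⟨m, rfl⟩ := ha
    refine ⟨-(QuadraticMap.polar Q m x • m - Q m • x), ?_⟩
    rw [involute_ι, reverse_ι, neg_mul, neg_mul, ι_mul_ι_mul_ι, ← map_neg]
  | one => exact ⟨x, by simp⟩
  | mul B C hB hC ihB ihC =>
    obtain ⟨y, hy⟩ := ihC x
    obtain ⟨z, hz⟩ := ihB y
    refine ⟨z, ?_⟩
    rw [map_mul, reverse.map_mul, show involute B * involute C * ι Q x * (reverse C * reverse B)
      = involute B * (involute C * ι Q x * reverse C) * reverse B by simp only [mul_assoc], hy, hz]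


end VersorProofAux

/-- If `A` is an invertible versor (an invertible element of the submonoid generated by
the image of `ι`), then twisted conjugation `x ↦ α(A)·ι(x)·A⁻¹` sends vectors to
vectors. -/
theorem involute_mul_ι_mul_invOf_mem_range_ι {R M : Type*} [CommRing R]
    [AddCommGroup M] [Module R M] {Q : QuadraticForm R M}
    (A : CliffordAlgebra Q) [Invertible A]
    (hA : A ∈ Submonoid.closure (Set.range (ι Q)))
    (x : M) :
    ∃ y : M, involute A * ι Q x * ⅟A = ι Q y := by
  obtain ⟨r, hr1, hr2⟩ := VersorProofAux.versor_mul_reverse_scalar hA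
  have hrunit : IsUnit r := by
    apply VersorProofAux.isUnit_of_isUnit_algebraMap Q
    rw [← hr1]
    have hrevA : IsUnit (reverse (Q := Q) A) :=
      ⟨⟨reverse A, reverse (⅟A),
        by rw [← reverse.map_mul, invOf_mul_self, reverse.map_one],
        by rw [← reverse.map_mul, mul_invOf_self, reverse.map_one]⟩, rfl⟩
    exact (isUnit_of_invertible A).mul hrevA
  obtain ⟨u, hu⟩ := hrunit
  have hinv : ⅟A = reverse A * algebraMap R _ (↑u⁻¹ : R) := by
    apply invOf_eq_right_inv
    rw [← mul_assoc, hr1, ← map_mul, ← hu, Units.mul_inv, map_one]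
  obtain ⟨y, hy⟩ := VersorProofAux.involute_mul_ι_mul_reverse_mem hA x
  refine ⟨(↑u⁻¹ : R) • y, ?_⟩
  rw [hinv, ← mul_assoc, hy, map_smul, ← Algebra.commutes, ← Algebra.smul_def]
end

section
/- Let B ∈ Cl(Q) be an invertible versor (an invertible element of the submonoid of Cl(Q) generated by the image of ι) and let W ∈ Cl(Q) be invertible. Suppose that for every vector x ∈ M, α(B)·ι(x)·B⁻¹ = α(W)·ι(x)·W⁻¹. Then for every vector x ∈ M, ι(x)·(rev(B)·W) = α(rev(B)·W)·ι(x); that is, the left contraction x ⌟ (rev(B)·W) = (1/2)(ι(x)·rev(B)·W − α(rev(B)·W)·ι(x)) vanishes for all x. -/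
open CliffordAlgebra

lemma reverse_mul_self_scalar {K M : Type*} [Field K]
    [AddCommGroup M] [Module K M] {Q : QuadraticForm K M}
    {B : CliffordAlgebra Q} (hB : B ∈ Submonoid.closure (Set.range (ι Q))) :
    ∃ c : K, reverse B * B = algebraMap K _ c := by
  induction hB using Submonoid.closure_induction with
  | mem x hx =>
    obtain ⟨m, rfl⟩ := hx
    exact ⟨Q m, by rw [reverse_ι, ι_sq_scalar]⟩
  | one => exact ⟨1, by simp⟩
  | mul a b _ _ ha hb =>
    obtain ⟨ca, ha⟩ := ha
    obtain ⟨cb, hb⟩ := hb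
    refine ⟨ca * cb, ?_⟩
    rw [reverse.map_mul, mul_assoc, ← mul_assoc (reverse a), ha,
      Algebra.commutes, ← mul_assoc, hb, ← map_mul, mul_comm cb ca]

/-- If `B` is an invertible versor and `W` is invertible with the same twisted conjugation
action on vectors as `B`, then the left contraction of every vector into `rev(B)·W`
vanishes: `ι(x)·(rev(B)·W) = α(rev(B)·W)·ι(x)` for all `x`. -/
theorem ι_mul_reverse_mul_eq_involute_mul_ι {K M : Type*} [Field K]
    [Invertible (2 : K)] [AddCommGroup M] [Module K M] {Q : QuadraticForm K M}
    (B : CliffordAlgebra Q) [Invertible B]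
    (hB : B ∈ Submonoid.closure (Set.range (ι Q)))
    (W : CliffordAlgebra Q) [Invertible W]
    (h : ∀ x : M, involute B * ι Q x * ⅟B = involute W * ι Q x * ⅟W) :
    ∀ x : M, ι Q x * (reverse B * W) = involute (reverse B * W) * ι Q x := by
  intro x
  obtain ⟨c, hc⟩ := reverse_mul_self_scalar hB
  have hW : involute W * ι Q x = involute B * ι Q x * ⅟B * W := by
    rw [h x, mul_assoc, invOf_mul_self, mul_one]
  symm
  calc involute (reverse B * W) * ι Q x
      = involute (reverse B) * (involute W * ι Q x) := by
        rw [map_mul, mul_assoc]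
    _ = involute (reverse B * B) * (ι Q x * (⅟B * W)) := by
        rw [hW, map_mul]; simp only [mul_assoc]
    _ = ι Q x * (reverse B * B * (⅟B * W)) := by
        rw [hc, involute.commutes]; simp only [Algebra.commutes, mul_assoc]
    _ = ι Q x * (reverse B * W) := by
        rw [mul_assoc (reverse B), ← mul_assoc B, mul_invOf_self, one_mul]
end

section
/- Assume M is finite-dimensional over K and the polar bilinear form of Q is nondegenerate. Let B ∈ Cl(Q) be an invertible versor (an invertible element of the submonoid of Cl(Q) generated by the image of ι) and let W ∈ Cl(Q) be invertible. Suppose that for every vector x ∈ M, α(B)·ι(x)·B⁻¹ = α(W)·ι(x)·W⁻¹. Then there exists a scalar c ∈ K such that W = algebraMap K Cl(Q) c · B; in particular W is itself an invertible versor. -/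
/-!
From `α(B) ι(x) B⁻¹ = α(W) ι(x) W⁻¹`, the element `u = B⁻¹ W` twisted-commutes with every vector:
`ι(x) u = α(u) ι(x)`. Take an orthogonal basis `e` with `Q(eⱼ) ≠ 0`. The linear maps
`σⱼ(x) = Q(eⱼ)⁻¹ eⱼ α(x) eⱼ` fix `u` and multiply a monomial `e_{i₁} ⋯ e_{i_r}` by
`(-1)^(number of occurrences of j)`. Averaging with `(1 + σⱼ)/2` for every `j` (here `2 ≠ 0`)
puts `u` in the span of the monomials in which every index occurs an even number of times,
and these are scalars because `eⱼ² = Q(eⱼ)`.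
-/

open CliffordAlgebra

theorem Submodule.mem_span_sep_of_forall_apply_eq_self {R V I : Type*} [Ring R]
    [Invertible (2 : R)] [AddCommGroup V] [Module R V] [Finite I] (f : I → V →ₗ[R] V)
    {s : Set V} (hs : ∀ j, ∀ v ∈ s, f j v = v ∨ f j v = -v) {x : V} (hx : x ∈ span R s)
    (hfx : ∀ j, f j x = x) : x ∈ span R {v ∈ s | ∀ j, f j v = v} := by
  classical
  have := Fintype.ofFinite I
  suffices ∀ T : Finset I, x ∈ span R {v ∈ s | ∀ j ∈ T, f j v = v} by
    simpa using this Finset.univ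
  intro T
  induction T using Finset.induction_on with
  | empty => simpa using hx
  | insert j T _ ih =>
    -- `id + f j` sends each generator `v` to `2 • v` or `0`, and sends `x` to `2 • x`.
    have hmap : (span R {v ∈ s | ∀ k ∈ T, f k v = v}).map (LinearMap.id + f j) ≤
        span R {v ∈ s | ∀ k ∈ insert j T, f k v = v} := by
      refine (Submodule.map_span_le _ _ _).2 fun v ⟨hvs, hvT⟩ => ?_
      rcases hs j v hvs with hv | hv
      · have hmem : v ∈ span R {v ∈ s | ∀ k ∈ insert j T, f k v = v} :=
          subset_span ⟨hvs, Finset.forall_mem_insert .. |>.2 ⟨hv, hvT⟩⟩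
        simpa [hv] using add_mem hmem hmem
      · simp [hv]
    have h2x := hmap (Submodule.mem_map_of_mem (f := LinearMap.id + f j) ih)
    rw [LinearMap.add_apply, LinearMap.id_apply, hfx j] at h2x
    rw [← invOf_two_smul_add_invOf_two_smul R x, ← smul_add]
    exact Submodule.smul_mem _ _ h2x

namespace CliffordAlgebra

section Monomial

variable {R M I : Type*} [CommRing R] [AddCommGroup M] [Module R M] {Q : QuadraticForm R M}
  (e : I → M)

variable (Q) in
def listMonomial (l : List I) : CliffordAlgebra Q :=
  (l.map fun i => ι Q (e i)).prod

@[simp]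
theorem listMonomial_nil : listMonomial Q e [] = 1 := rfl

@[simp]
theorem listMonomial_cons (j : I) (l : List I) :
    listMonomial Q e (j :: l) = ι Q (e j) * listMonomial Q e l :=
  List.prod_cons

@[simp]
theorem listMonomial_append (l l' : List I) :
    listMonomial Q e (l ++ l') = listMonomial Q e l * listMonomial Q e l' := by
  simp [listMonomial]

theorem involute_listMonomial (l : List I) :
    involute (listMonomial Q e l) = (-1 : R) ^ l.length • listMonomial Q e l := by
  simpa [listMonomial, Function.comp_def] using involute_prod_map_ι (Q := Q) (l.map e)

variable {e} in
theorem span_range_listMonomial (he : Submodule.span R (Set.range e) = ⊤) :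
    Submodule.span R (Set.range (listMonomial Q e)) = ⊤ := by
  set S := Submodule.span R (Set.range (listMonomial Q e))
  have hι : (⊤ : Submodule R M).map (ι Q) ≤ S := by
    rw [← he]
    exact (Submodule.map_span_le _ _ _).2 fun _ ⟨i, hi⟩ =>
      Submodule.subset_span ⟨[i], by simp [hi]⟩
  have hmul : S * S ≤ S := by
    rw [Submodule.span_mul_span]
    refine Submodule.span_mono ?_
    rintro _ ⟨_, ⟨l, rfl⟩, _, ⟨l', rfl⟩, rfl⟩
    exact ⟨l ++ l', listMonomial_append e l l'⟩
  refine Submodule.eq_top_iff'.2 fun x => ?_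
  induction x using CliffordAlgebra.induction with
  | algebraMap r =>
    rw [Algebra.algebraMap_eq_smul_one]
    exact S.smul_mem r (Submodule.subset_span ⟨[], rfl⟩)
  | ι x => exact hι (Submodule.mem_map_of_mem Submodule.mem_top)
  | mul a b ha hb => exact hmul (Submodule.mul_mem_mul ha hb)
  | add a b ha hb => exact S.add_mem ha hb

variable [DecidableEq I] {e}

theorem ι_mul_listMonomial (he : Pairwise fun i j => Q.IsOrtho (e i) (e j)) (j : I)
    (l : List I) : ι Q (e j) * listMonomial Q e l =
      (-1 : R) ^ (l.length + l.count j) • (listMonomial Q e l * ι Q (e j)) := by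
  induction l with
  | nil => simp
  | cons k l ih =>
    rw [listMonomial_cons, ← mul_assoc]
    obtain rfl | hkj := eq_or_ne k j
    · conv_lhs => rw [mul_assoc, ih, mul_smul_comm, ← mul_assoc]
      congr 1
      simp only [List.length_cons, List.count_cons_self]
      ring
    · rw [ι_mul_ι_comm_of_isOrtho (he hkj.symm), neg_mul, mul_assoc, ih, mul_smul_comm,
        ← mul_assoc, ← neg_smul]
      congr 1
      simp only [List.length_cons, List.count_cons_of_ne hkj]
      ring

theorem ι_mul_involute_listMonomial_mul_ι (he : Pairwise fun i j => Q.IsOrtho (e i) (e j))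
    (j : I) (l : List I) : ι Q (e j) * involute (listMonomial Q e l) * ι Q (e j) =
      ((-1 : R) ^ l.count j * Q (e j)) • listMonomial Q e l := by
  rw [involute_listMonomial, mul_smul_comm, smul_mul_assoc, ι_mul_listMonomial he,
    smul_mul_assoc, mul_assoc, ι_sq_scalar, ← Algebra.commutes, ← Algebra.smul_def, smul_smul,
    smul_smul]
  congr 1
  rw [← pow_add, ← add_assoc, ← two_mul, pow_add, pow_mul, neg_one_sq, one_pow, one_mul]

theorem listMonomial_cons_append_cons_self (he : Pairwise fun i j => Q.IsOrtho (e i) (e j))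
    (j : I) (l₁ l₂ : List I) : listMonomial Q e (j :: (l₁ ++ j :: l₂)) =
      ((-1 : R) ^ (l₁.length + l₁.count j) * Q (e j)) • listMonomial Q e (l₁ ++ l₂) := by
  rw [listMonomial_cons, listMonomial_append, listMonomial_cons, ← mul_assoc,
    ι_mul_listMonomial he, smul_mul_assoc, mul_assoc, ← mul_assoc (ι Q (e j)), ι_sq_scalar,
    ← mul_assoc, ← Algebra.commutes, mul_assoc, ← Algebra.smul_def, smul_smul,
    listMonomial_append]

theorem listMonomial_mem_bot_of_even_count (he : Pairwise fun i j => Q.IsOrtho (e i) (e j)) :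
    ∀ l : List I, (∀ i, Even (l.count i)) →
      listMonomial Q e l ∈ (⊥ : Subalgebra R (CliffordAlgebra Q))
  | [], _ => one_mem _
  | j :: l, hl => by
    have hj : j ∈ l := by
      by_contra hj
      simpa [List.count_eq_zero.2 hj] using hl j
    obtain ⟨l₁, l₂, rfl⟩ := List.append_of_mem hj
    rw [listMonomial_cons_append_cons_self he]
    refine Subalgebra.smul_mem _
      (listMonomial_mem_bot_of_even_count he (l₁ ++ l₂) fun i => ?_) _
    have := hl i
    obtain rfl | hij := eq_or_ne i j
    · simp only [List.count_cons_self, List.count_append] at this ⊢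
      obtain ⟨m, hm⟩ := this
      exact ⟨m - 1, by omega⟩
    · simpa [List.count_append, List.count_cons_of_ne hij.symm] using this
termination_by l => l.length

end Monomial

section Field

variable {K M : Type*} [Field K] [Invertible (2 : K)] [AddCommGroup M] [Module K M]
  {Q : QuadraticForm K M}

theorem mem_bot_of_ι_mul_eq_involute_mul_of_isOrtho {I : Type*} [Finite I] [DecidableEq I]
    {e : I → M} (hspan : Submodule.span K (Set.range e) = ⊤)
    (he : Pairwise fun i j => Q.IsOrtho (e i) (e j)) (hQe : ∀ i, Q (e i) ≠ 0)
    {u : CliffordAlgebra Q} (hu : ∀ i, ι Q (e i) * u = involute u * ι Q (e i)) :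
    u ∈ (⊥ : Subalgebra K (CliffordAlgebra Q)) := by
  let σ : I → CliffordAlgebra Q →ₗ[K] CliffordAlgebra Q := fun j => (Q (e j))⁻¹ •
    (LinearMap.mulRight K (ι Q (e j)) ∘ₗ LinearMap.mulLeft K (ι Q (e j)) ∘ₗ
      involute.toLinearMap)
  have hσ : ∀ j x, σ j x = (Q (e j))⁻¹ • (ι Q (e j) * involute x * ι Q (e j)) :=
    fun _ _ => rfl
  have hσu : ∀ j, σ j u = u := by
    intro j
    have hu' : ι Q (e j) * involute u = u * ι Q (e j) := by
      simpa using congrArg involute (hu j)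
    rw [hσ, hu', mul_assoc, ι_sq_scalar, ← Algebra.commutes, ← Algebra.smul_def,
      inv_smul_smul₀ (hQe j)]
  have hσmon : ∀ j l,
      σ j (listMonomial Q e l) = (-1 : K) ^ l.count j • listMonomial Q e l := by
    intro j l
    rw [hσ, ι_mul_involute_listMonomial_mul_ι he, smul_smul, mul_left_comm,
      inv_mul_cancel₀ (hQe j), mul_one]
  have hsign : ∀ j, ∀ v ∈ Set.range (listMonomial Q e), σ j v = v ∨ σ j v = -v := by
    rintro j _ ⟨l, rfl⟩
    rcases neg_one_pow_eq_or K (l.count j) with h | h <;> simp [hσmon, h]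
  have hfixed := Submodule.mem_span_sep_of_forall_apply_eq_self σ hsign
    (span_range_listMonomial hspan ▸ Submodule.mem_top) hσu
  refine (Submodule.span_le (p := Subalgebra.toSubmodule ⊥)).2 ?_ hfixed
  rintro _ ⟨⟨l, rfl⟩, hl⟩
  -- a nonzero monomial fixed by every `σ j` has every index occurring an even number of times
  by_cases h0 : listMonomial Q e l = 0
  · exact h0 ▸ zero_mem _
  refine listMonomial_mem_bot_of_even_count he l fun j => ?_
  have hneg : (-1 : K) ≠ 1 := fun h => two_ne_zero (by linear_combination -h : (2 : K) = 0)
  refine (neg_one_pow_eq_one_iff_even hneg).1 (smul_left_injective K h0 ?_)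
  simpa [hσmon] using hl j

theorem mem_bot_of_ι_mul_eq_involute_mul [FiniteDimensional K M]
    (hQ : (QuadraticMap.polarBilin Q).Nondegenerate) {u : CliffordAlgebra Q}
    (hu : ∀ x, ι Q x * u = involute u * ι Q x) :
    u ∈ (⊥ : Subalgebra K (CliffordAlgebra Q)) := by
  obtain ⟨e, he⟩ :=
    LinearMap.BilinForm.exists_orthogonal_basis (B := QuadraticMap.polarBilin Q)
    (LinearMap.isSymm_def.2 fun x y => QuadraticMap.polar_comm Q x y)
  refine mem_bot_of_ι_mul_eq_involute_mul_of_isOrtho e.span_eq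
    (fun i j hij => QuadraticMap.isOrtho_polarBilin.1 (he hij)) (fun i hi => ?_) fun i => hu (e i)
  apply LinearMap.BilinForm.iIsOrtho.not_isOrtho_basis_self_of_nondegenerate he hQ i
  rw [QuadraticMap.polarBilin_apply_apply, QuadraticMap.polar_self, hi, smul_zero]

end Field

end CliffordAlgebra

theorem exists_scalar_eq_of_conj_eq_general {K M : Type*} [Field K]
    [Invertible (2 : K)] [AddCommGroup M] [Module K M] [FiniteDimensional K M]
    {Q : QuadraticForm K M}
    (hQ : (QuadraticMap.polarBilin Q).Nondegenerate)
    (B : CliffordAlgebra Q) [Invertible B]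
    (W : CliffordAlgebra Q) [Invertible W]
    (h : ∀ x : M, involute B * ι Q x * ⅟B = involute W * ι Q x * ⅟W) :
    ∃ c : K, W = algebraMap K (CliffordAlgebra Q) c * B := by
  have hu : ∀ x, ι Q x * (⅟B * W) = involute (⅟B * W) * ι Q x := fun x =>
    calc ι Q x * (⅟B * W) = involute (⅟B) * (involute B * ι Q x * ⅟B) * W := by
          simp only [← mul_assoc, ← map_mul, invOf_mul_self, map_one, one_mul]
      _ = involute (⅟B) * (involute W * ι Q x * ⅟W) * W := by rw [h x]
      _ = involute (⅟B * W) * ι Q x := by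
          simp only [map_mul, mul_assoc, invOf_mul_self, mul_one]
  obtain ⟨c, hc⟩ := Algebra.mem_bot.1 (mem_bot_of_ι_mul_eq_involute_mul hQ hu)
  refine ⟨c, ?_⟩
  rw [Algebra.commutes, hc, ← mul_assoc, mul_invOf_self, one_mul]

/-- Over a finite-dimensional space with nondegenerate polar form: if `W` is invertible
and its twisted conjugation agrees on all vectors with that of an invertible versor `B`,
then `W` is a scalar multiple of `B` (in particular `W` is itself an invertible versor). -/
theorem exists_scalar_eq_of_conj_eq {K M : Type*} [Field K]
    [Invertible (2 : K)] [AddCommGroup M] [Module K M] [FiniteDimensional K M]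
    {Q : QuadraticForm K M}
    (hQ : (QuadraticMap.polarBilin Q).Nondegenerate)
    (B : CliffordAlgebra Q) [Invertible B]
    (hB : B ∈ Submonoid.closure (Set.range (ι Q)))
    (W : CliffordAlgebra Q) [Invertible W]
    (h : ∀ x : M, involute B * ι Q x * ⅟B = involute W * ι Q x * ⅟W) :
    ∃ c : K, W = algebraMap K (CliffordAlgebra Q) c * B :=
  exists_scalar_eq_of_conj_eq_general hQ B W h
end
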